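/- For all α, γ, δ ∈ ℝ, the three bases {𝕀, H₂(α,0), H₃(γ,δ)} of ℂ⁴ are pairwise mutually unbiased, where H₂(α,β) = (1/2)·[[1,1,1,1],[1,1,−1,−1],[e^{iα},−e^{iα}, i·e^{iβ}, −i·e^{iβ}],[e^{iα},−e^{iα},−i·e^{iβ}, i·e^{iβ}]] and H₃(γ,δ) = (1/2)·[[1,1,1,1],[1,1,−1,−1],[−e^{iγ}, e^{iγ}, e^{iδ}, −e^{iδ}],[e^{iγ},−e^{iγ}, e^{iδ}, −e^{iδ}]], and 𝕀 denotes the computational (standard) basis. -/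

import Mathlib

/-!
With `a = e^{iα}`, `b = e^{iγ}`, `c = e^{iδ}`, the matrices are `H₂(α,0) = ½ · hadamard₂ a` and
`H₃(γ,δ) = ½ · hadamard₃ b c`, where `hadamard₂ a` and `hadamard₃ b c` have unimodular entries and
pairwise orthogonal columns, i.e. `Mᴴ M = 4`. Hence both are unitary with entries of modulus `½`.
Expanding the product, `H₂ᴴ H₃ = ½ · hadamard₂₃ a b c` with
`hadamard₂₃ a b c = [[1, 1, āc, -āc], [1, 1, -āc, āc], [ib, -ib, 1, 1], [-ib, ib, 1, 1]]`,
again unimodular, so the second and third bases are unbiased as well.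
-/

open Matrix Complex ComplexConjugate

def hadamard₂ (a : ℂ) : Matrix (Fin 4) (Fin 4) ℂ :=
  !![1, 1, 1, 1; 1, 1, -1, -1; a, -a, I, -I; a, -a, -I, I]

def hadamard₃ (b c : ℂ) : Matrix (Fin 4) (Fin 4) ℂ :=
  !![1, 1, 1, 1; 1, 1, -1, -1; -b, b, c, -c; b, -b, c, -c]

def hadamard₂₃ (a b c : ℂ) : Matrix (Fin 4) (Fin 4) ℂ :=
  !![1, 1, conj a * c, -(conj a * c); 1, 1, -(conj a * c), conj a * c;
    I * b, -(I * b), 1, 1; -(I * b), I * b, 1, 1]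

lemma norm_half_smul_apply {m n : Type*} {M : Matrix m n ℂ} {j : m} {k : n}
    (h : ‖M j k‖ = 1) : ‖((1 / 2 : ℂ) • M) j k‖ = 1 / 2 := by
  simp [h]

lemma half_smul_mem_unitaryGroup {n : Type*} [Fintype n] [DecidableEq n]
    {M : Matrix n n ℂ} (h : Mᴴ * M = 4) : (1 / 2 : ℂ) • M ∈ unitaryGroup n ℂ := by
  rw [mem_unitaryGroup_iff', star_eq_conjTranspose, conjTranspose_smul, smul_mul_smul, h]
  ext j k
  norm_num [ofNat_apply, one_apply]

section

variable {a b c : ℂ}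

lemma norm_hadamard₂_apply (ha : ‖a‖ = 1) (j k : Fin 4) : ‖hadamard₂ a j k‖ = 1 := by
  fin_cases j <;> fin_cases k <;> simp [hadamard₂, ha]

lemma norm_hadamard₃_apply (hb : ‖b‖ = 1) (hc : ‖c‖ = 1) (j k : Fin 4) :
    ‖hadamard₃ b c j k‖ = 1 := by
  fin_cases j <;> fin_cases k <;> simp [hadamard₃, hb, hc]

lemma norm_hadamard₂₃_apply (ha : ‖a‖ = 1) (hb : ‖b‖ = 1) (hc : ‖c‖ = 1) (j k : Fin 4) :
    ‖hadamard₂₃ a b c j k‖ = 1 := by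
  fin_cases j <;> fin_cases k <;> simp [hadamard₂₃, ha, hb, hc]

lemma conjTranspose_hadamard₂_mul_self (ha : ‖a‖ = 1) : (hadamard₂ a)ᴴ * hadamard₂ a = 4 := by
  rw [← Matrix.ext_iff]
  intro j k
  fin_cases j <;> fin_cases k <;>
    simp [hadamard₂, mul_apply, Fin.sum_univ_four, ofNat_apply, conj_mul', ha] <;> ring

lemma conjTranspose_hadamard₃_mul_self (hb : ‖b‖ = 1) (hc : ‖c‖ = 1) :
    (hadamard₃ b c)ᴴ * hadamard₃ b c = 4 := by
  rw [← Matrix.ext_iff]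
  intro j k
  fin_cases j <;> fin_cases k <;>
    simp [hadamard₃, mul_apply, Fin.sum_univ_four, ofNat_apply, conj_mul', hb, hc] <;> ring

variable (a b c) in
lemma conjTranspose_hadamard₂_mul_hadamard₃ :
    (hadamard₂ a)ᴴ * hadamard₃ b c = (2 : ℂ) • hadamard₂₃ a b c := by
  ext j k
  fin_cases j <;> fin_cases k <;>
    simp [hadamard₂, hadamard₃, hadamard₂₃, mul_apply, Fin.sum_univ_four] <;> ring

end

/-- The triplet {𝕀, H₂(α,0), H₃(γ,δ)} is a triplet of pairwise mutually
unbiased bases of ℂ⁴ for all α, γ, δ: both matrices are complex Hadamard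
matrices (so each is unbiased with the computational basis 𝕀), and
H₂(α,0)ᴴ·H₃(γ,δ) has all entries of modulus 1/2. -/
theorem stmt_9 (α γ δ : ℝ)
    (H₂ H₃ : Matrix (Fin 4) (Fin 4) ℂ)
    (hH₂ : H₂ = (1/2 : ℂ) • !![(1 : ℂ), 1, 1, 1;
        1, 1, -1, -1;
        Complex.exp (α * Complex.I), -Complex.exp (α * Complex.I),
          Complex.I, -Complex.I;
        Complex.exp (α * Complex.I), -Complex.exp (α * Complex.I),
          -Complex.I, Complex.I])
    (hH₃ : H₃ = (1/2 : ℂ) • !![(1 : ℂ), 1, 1, 1;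
        1, 1, -1, -1;
        -Complex.exp (γ * Complex.I), Complex.exp (γ * Complex.I),
          Complex.exp (δ * Complex.I), -Complex.exp (δ * Complex.I);
        Complex.exp (γ * Complex.I), -Complex.exp (γ * Complex.I),
          Complex.exp (δ * Complex.I), -Complex.exp (δ * Complex.I)]) :
    H₂ ∈ Matrix.unitaryGroup (Fin 4) ℂ ∧
    H₃ ∈ Matrix.unitaryGroup (Fin 4) ℂ ∧
    (∀ j k : Fin 4, ‖H₂ j k‖ = 1 / 2) ∧
    (∀ j k : Fin 4, ‖H₃ j k‖ = 1 / 2) ∧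
    (∀ j k : Fin 4, ‖(H₂ᴴ * H₃) j k‖ = 1 / 2) := by
  have ha := norm_exp_ofReal_mul_I α
  have hb := norm_exp_ofReal_mul_I γ
  have hc := norm_exp_ofReal_mul_I δ
  change H₂ = (1 / 2 : ℂ) • hadamard₂ (exp (α * I)) at hH₂
  change H₃ = (1 / 2 : ℂ) • hadamard₃ (exp (γ * I)) (exp (δ * I)) at hH₃
  have hprod : H₂ᴴ * H₃ = (1 / 2 : ℂ) • hadamard₂₃ (exp (α * I)) (exp (γ * I)) (exp (δ * I)) := by
    rw [hH₂, hH₃, conjTranspose_smul, smul_mul_smul, conjTranspose_hadamard₂_mul_hadamard₃,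
      smul_smul]
    norm_num
  subst hH₂ hH₃
  refine ⟨half_smul_mem_unitaryGroup (conjTranspose_hadamard₂_mul_self ha),
    half_smul_mem_unitaryGroup (conjTranspose_hadamard₃_mul_self hb hc),
    fun j k => norm_half_smul_apply (norm_hadamard₂_apply ha j k),
    fun j k => norm_half_smul_apply (norm_hadamard₃_apply hb hc j k),
    fun j k => ?_⟩
  rw [hprod]
  exact norm_half_smul_apply (norm_hadamard₂₃_apply ha hb hc j k)
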